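/- arXiv:2106.03780 — 3 statements merged into one kernel-verified Lean document; each statement's English description precedes it below -/
import Mathlib

section
/- Let f : ℝ × ℝⁿ × ℝᵖ → ℝⁿ, γ : ℝ × ℝⁿ × ℝᵖ → ℝ and Γ : ℝⁿ × ℝᵖ → ℝ be continuously differentiable, and let x : ℝᵖ × [0,T] → ℝⁿ be twice continuously differentiable with ∂x/∂t(θ,t) = f(t, x(θ,t), θ) and x(θ,0) = x₀ independent of θ. Define J(θ) = ∫₀ᵀ γ(t, x(θ,t), θ) dt + Γ(x(θ,T), θ). Fix θ₀ ∈ ℝᵖ and suppose λ : [0,T] → ℝⁿ is continuously differentiable and satisfies the backward adjoint equation λ'(t)ᵀ = −λ(t)ᵀ D_x f(t, x(θ₀,t), θ₀) − D_x γ(t, x(θ₀,t), θ₀) for all t ∈ [0,T] with terminal condition λ(T)ᵀ = D_x Γ(x(θ₀,T), θ₀). Then the derivative of J at θ₀ equals dJ/dθ = D_θ Γ(x(θ₀,T), θ₀) + ∫₀ᵀ [λ(t)ᵀ D_θ f(t, x(θ₀,t), θ₀) + D_θ γ(t, x(θ₀,t), θ₀)] dt, where D_x, D_θ denote partial Fréchet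 derivatives in the state and parameter arguments and λ(t)ᵀ M denotes the composition of the linear map M with the linear functional y ↦ ⟨λ(t), y⟩. -/
/-!
Adding `∫₀ᵀ (⟪λ, ẋ⟫ + ⟪λ', x⟫) dt - ⟪λ T, x T⟫ + ⟪λ 0, x₀⟫ = 0` to `J` turns it into
`∫₀ᵀ (γ + ⟪λ, f⟫ + ⟪λ', x⟫) dt + Γ(x T, θ) - ⟪λ T, x T⟫ + const`. The θ-derivative of the new
integrand is jointly continuous in `(θ, t)`, hence bounded on a compact neighbourhood of `θ₀`
times `[0, T]`, so it may be differentiated under the integral sign. In the result the state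
sensitivity `∂x/∂θ` only appears multiplied by `λ'ᵀ + λᵀ D_x f + D_x γ` inside the integral and by
`D_x Γ - λ(T)ᵀ` at the terminal time, and both vanish by the adjoint equation.
-/

open MeasureTheory Set Function
open scoped RealInnerProductSpace

section ParamFDeriv

variable {E τ P G : Type*} [NormedAddCommGroup E] [NormedSpace ℝ E] [TopologicalSpace τ]
  [NormedAddCommGroup P] [NormedSpace ℝ P] [NormedAddCommGroup G] [NormedSpace ℝ G]

def HasContinuousParamFDerivOn (g : E → τ → G) (s : Set τ) : Prop :=
  ContinuousOn (uncurry g) (univ ×ˢ s) ∧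
    ∃ g' : E → τ → E →L[ℝ] G, ContinuousOn (uncurry g') (univ ×ˢ s) ∧
      ∀ t ∈ s, ∀ θ, HasFDerivAt (g · t) (g' θ t) θ

variable {s : Set τ}

theorem hasContinuousParamFDerivOn_param :
    HasContinuousParamFDerivOn (fun (θ : E) (_ : τ) => θ) s :=
  ⟨continuous_fst.continuousOn, fun _ _ => ContinuousLinearMap.id ℝ E, continuousOn_const,
    fun _ _ θ => hasFDerivAt_id θ⟩

theorem ContinuousOn.hasContinuousParamFDerivOn {c : τ → G} (hc : ContinuousOn c s) :
    HasContinuousParamFDerivOn (fun (_ : E) t => c t) s :=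
  ⟨hc.comp continuousOn_snd fun _ h => h.2, fun _ _ => 0, continuousOn_const,
    fun t _ θ => hasFDerivAt_const (c t) θ⟩

namespace HasContinuousParamFDerivOn

theorem continuousOn_apply {g : E → τ → G} (hg : HasContinuousParamFDerivOn g s) (θ : E) :
    ContinuousOn (g θ) s :=
  hg.1.comp (continuousOn_const.prodMk continuousOn_id) fun _ ht => ⟨mem_univ θ, ht⟩

theorem prodMk {g₁ : E → τ → P} {g₂ : E → τ → G} (h₁ : HasContinuousParamFDerivOn g₁ s)
    (h₂ : HasContinuousParamFDerivOn g₂ s) :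
    HasContinuousParamFDerivOn (fun θ t => (g₁ θ t, g₂ θ t)) s := by
  obtain ⟨hc₁, g₁', hc₁', hd₁⟩ := h₁
  obtain ⟨hc₂, g₂', hc₂', hd₂⟩ := h₂
  exact ⟨hc₁.prodMk hc₂, fun θ t => (g₁' θ t).prod (g₂' θ t),
    (ContinuousLinearMap.prodₗᵢ ℝ).continuous.comp_continuousOn (hc₁'.prodMk hc₂'),
    fun t ht θ => (hd₁ t ht θ).prodMk (hd₂ t ht θ)⟩

theorem comp {Φ : P → G} (hΦ : ContDiff ℝ 1 Φ) {g : E → τ → P}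
    (hg : HasContinuousParamFDerivOn g s) :
    HasContinuousParamFDerivOn (fun θ t => Φ (g θ t)) s := by
  obtain ⟨hc, g', hc', hd⟩ := hg
  exact ⟨hΦ.continuous.comp_continuousOn hc, fun θ t => (fderiv ℝ Φ (g θ t)).comp (g' θ t),
    ((hΦ.continuous_fderiv one_ne_zero).comp_continuousOn hc).clm_comp hc',
    fun t ht θ => ((hΦ.differentiable one_ne_zero _).hasFDerivAt).comp θ (hd t ht θ)⟩

theorem add {g₁ g₂ : E → τ → G} (h₁ : HasContinuousParamFDerivOn g₁ s)
    (h₂ : HasContinuousParamFDerivOn g₂ s) :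
    HasContinuousParamFDerivOn (fun θ t => g₁ θ t + g₂ θ t) s := by
  obtain ⟨hc₁, g₁', hc₁', hd₁⟩ := h₁
  obtain ⟨hc₂, g₂', hc₂', hd₂⟩ := h₂
  exact ⟨hc₁.add hc₂, fun θ t => g₁' θ t + g₂' θ t, hc₁'.add hc₂',
    fun t ht θ => (hd₁ t ht θ).add (hd₂ t ht θ)⟩

theorem clm_apply {A : τ → P →L[ℝ] G} (hA : ContinuousOn A s) {g : E → τ → P}
    (hg : HasContinuousParamFDerivOn g s) :
    HasContinuousParamFDerivOn (fun θ t => A t (g θ t)) s :=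
  (hA.hasContinuousParamFDerivOn.prodMk hg).comp isBoundedBilinearMap_apply.contDiff

theorem hasFDerivAt_intervalIntegral [WeaklyLocallyCompactSpace E] {g : E → ℝ → G} {a b : ℝ}
    (hg : HasContinuousParamFDerivOn g (uIcc a b)) (θ₀ : E) :
    HasFDerivAt (fun θ => ∫ t in a..b, g θ t) (∫ t in a..b, fderiv ℝ (g · t) θ₀) θ₀ := by
  have hslice := hg.continuousOn_apply
  obtain ⟨-, g', hc', hd⟩ := hg
  obtain ⟨K, hK, hKθ₀⟩ := exists_compact_mem_nhds θ₀
  obtain ⟨C, hC⟩ := (hK.prod isCompact_uIcc).exists_bound_of_continuousOn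
    (hc'.mono (prod_mono (subset_univ K) subset_rfl))
  rw [intervalIntegral.integral_congr fun t ht => (hd t ht θ₀).fderiv]
  exact intervalIntegral.hasFDerivAt_integral_of_dominated_of_fderiv_le (bound := fun _ => C) hKθ₀
    (.of_forall fun θ => ((hslice θ).mono uIoc_subset_uIcc).aestronglyMeasurable measurableSet_uIoc)
    ((hslice θ₀).intervalIntegrable)
    (((hc'.comp (continuousOn_const.prodMk continuousOn_id) fun _ ht => ⟨mem_univ θ₀, ht⟩).mono
      uIoc_subset_uIcc).aestronglyMeasurable measurableSet_uIoc)
    (ae_of_all _ fun t ht θ hθ => hC (θ, t) ⟨hθ, uIoc_subset_uIcc ht⟩) intervalIntegrable_const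
    (ae_of_all _ fun t ht θ _ => hd t (uIoc_subset_uIcc ht) θ)

end HasContinuousParamFDerivOn

theorem ContDiffOn.hasContinuousParamFDerivOn {T : Type*} [NormedAddCommGroup T] [NormedSpace ℝ T]
    {X : E → T → G} {s : Set T} (hX : ContDiffOn ℝ 1 (uncurry X) (univ ×ˢ s))
    (hs : UniqueDiffOn ℝ s) : HasContinuousParamFDerivOn X s := by
  refine ⟨hX.continuousOn,
    fun θ t => (fderivWithin ℝ (uncurry X) (univ ×ˢ s) (θ, t)).comp (.inl ℝ E T),
    (hX.continuousOn_fderivWithin (uniqueDiffOn_univ.prod hs) le_rfl).clm_comp continuousOn_const,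
    fun t ht θ => ?_⟩
  have hXd := (hX.differentiableOn one_ne_zero (θ, t) ⟨mem_univ θ, ht⟩).hasFDerivWithinAt
  rw [← hasFDerivWithinAt_univ]
  exact hXd.comp θ (hasFDerivAt_prodMk_left (𝕜 := ℝ) θ t).hasFDerivWithinAt
    fun θ' _ => mk_mem_prod (mem_univ θ') ht

end ParamFDeriv

section Graph

variable {E F G : Type*} [NormedAddCommGroup E] [NormedSpace ℝ E]
  [NormedAddCommGroup F] [NormedSpace ℝ F] [NormedAddCommGroup G] [NormedSpace ℝ G]

theorem DifferentiableAt.hasFDerivAt_comp_graph {φ : F × E → G} {u : E → F} {u' : E →L[ℝ] F}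
    {θ₀ : E} (hφ : DifferentiableAt ℝ φ (u θ₀, θ₀)) (hu : HasFDerivAt u u' θ₀) :
    HasFDerivAt (fun θ => φ (u θ, θ))
      ((fderiv ℝ (fun y => φ (y, θ₀)) (u θ₀)).comp u' + fderiv ℝ (fun θ => φ (u θ₀, θ)) θ₀) θ₀ := by
  have hφ' := hφ.hasFDerivAt
  have hD₁ : HasFDerivAt (fun y => φ (y, θ₀)) ((fderiv ℝ φ (u θ₀, θ₀)).comp (.inl ℝ F E)) (u θ₀) :=
    hφ'.comp (u θ₀) (hasFDerivAt_prodMk_left (u θ₀) θ₀)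
  have hD₂ : HasFDerivAt (fun θ => φ (u θ₀, θ)) ((fderiv ℝ φ (u θ₀, θ₀)).comp (.inr ℝ F E)) θ₀ :=
    hφ'.comp θ₀ (hasFDerivAt_prodMk_right (u θ₀) θ₀)
  rw [hD₁.fderiv, hD₂.fderiv]
  refine (hφ'.comp (f := fun θ => (u θ, θ)) θ₀ (hu.prodMk (hasFDerivAt_id θ₀))).congr_fderiv ?_
  ext v
  simp [← map_add]

end Graph

section Adjoint

variable {E F : Type*} [NormedAddCommGroup E] [NormedSpace ℝ E]
  [NormedAddCommGroup F] [InnerProductSpace ℝ F]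

theorem intervalIntegral.integral_deriv_inner_eq_sub {u u' v v' : ℝ → F} {a b : ℝ} (hab : a ≤ b)
    (hu : ∀ t ∈ Icc a b, HasDerivWithinAt u (u' t) (Icc a b) t)
    (hv : ∀ t ∈ Icc a b, HasDerivWithinAt v (v' t) (Icc a b) t)
    (hu' : ContinuousOn u' (Icc a b)) (hv' : ContinuousOn v' (Icc a b)) :
    ∫ t in a..b, (⟪u t, v' t⟫ + ⟪u' t, v t⟫) = ⟪u b, v b⟫ - ⟪u a, v a⟫ := by
  have hcu : ContinuousOn u (Icc a b) := fun t ht => (hu t ht).continuousWithinAt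
  have hcv : ContinuousOn v (Icc a b) := fun t ht => (hv t ht).continuousWithinAt
  have hint : IntervalIntegrable (fun t => ⟪u t, v' t⟫ + ⟪u' t, v t⟫) volume a b :=
    ((hcu.inner hv').add (hu'.inner hcv)).intervalIntegrable_of_Icc hab
  refine integral_eq_sub_of_hasDeriv_right_of_le hab (hcu.inner hcv) (fun t ht => ?_) hint
  have ht' := Ioo_subset_Icc_self ht
  exact ((hu t ht').inner ℝ (hv t ht')).mono_of_mem_nhdsWithin
    (Icc_mem_nhdsGT_of_mem ⟨ht'.1, ht.2⟩)

variable {u : E → F} {u' : E →L[ℝ] F} {θ₀ : E}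

theorem hasFDerivAt_add_inner_add_inner_of_adjoint {φ : F × E → ℝ} {ψ : F × E → F} {l m : F}
    (hφ : DifferentiableAt ℝ φ (u θ₀, θ₀)) (hψ : DifferentiableAt ℝ ψ (u θ₀, θ₀))
    (hu : HasFDerivAt u u' θ₀)
    (hadj : innerSL ℝ m = -((innerSL ℝ l).comp (fderiv ℝ (fun y => ψ (y, θ₀)) (u θ₀)))
      - fderiv ℝ (fun y => φ (y, θ₀)) (u θ₀)) :
    HasFDerivAt (fun θ => φ (u θ, θ) + (⟪l, ψ (u θ, θ)⟫ + ⟪m, u θ⟫))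
      ((innerSL ℝ l).comp (fderiv ℝ (fun θ => ψ (u θ₀, θ)) θ₀)
        + fderiv ℝ (fun θ => φ (u θ₀, θ)) θ₀) θ₀ := by
  refine ((hφ.hasFDerivAt_comp_graph hu).add
    (((innerSL ℝ l).hasFDerivAt.comp θ₀ (hψ.hasFDerivAt_comp_graph hu)).add
      ((innerSL ℝ m).hasFDerivAt.comp θ₀ hu))).congr_fderiv ?_
  rw [hadj]
  simp only [ContinuousLinearMap.comp_add, ContinuousLinearMap.sub_comp,
    ContinuousLinearMap.neg_comp, ContinuousLinearMap.comp_assoc]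
  abel

theorem hasFDerivAt_sub_inner_of_adjoint {Φ : F × E → ℝ} {l : F}
    (hΦ : DifferentiableAt ℝ Φ (u θ₀, θ₀)) (hu : HasFDerivAt u u' θ₀)
    (hl : innerSL ℝ l = fderiv ℝ (fun y => Φ (y, θ₀)) (u θ₀)) :
    HasFDerivAt (fun θ => Φ (u θ, θ) - ⟪l, u θ⟫) (fderiv ℝ (fun θ => Φ (u θ₀, θ)) θ₀) θ₀ := by
  refine ((hΦ.hasFDerivAt_comp_graph hu).sub
    ((innerSL ℝ l).hasFDerivAt.comp θ₀ hu)).congr_fderiv ?_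
  rw [hl]
  abel

end Adjoint

/-- **Theorem 2 (Path-wise Backward Adjoint Gradients), deterministic specialization.**
For `J(θ) = ∫₀ᵀ γ(t, x(θ,t), θ) dt + Γ(x(θ,T), θ)` with `ẋ = f(t, x, θ)`,
`x(θ,0) = x₀` independent of `θ`, if the adjoint `λ` satisfies
`λ'(t)ᵀ = −λ(t)ᵀ D_x f − D_x γ` with `λ(T)ᵀ = D_x Γ`, then
`dJ/dθ|_{θ₀} = D_θ Γ + ∫₀ᵀ [λ(t)ᵀ D_θ f + D_θ γ] dt`.
Here `λ(t)ᵀ M` is the composition of `M` with the functional `y ↦ ⟨λ(t), y⟩`,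
i.e. `(innerSL ℝ (l t)).comp M`. -/
theorem backward_adjoint_gradient
    (n p : ℕ) (T : ℝ) (hT : 0 < T)
    (f : ℝ → EuclideanSpace ℝ (Fin n) → EuclideanSpace ℝ (Fin p) → EuclideanSpace ℝ (Fin n))
    (γ : ℝ → EuclideanSpace ℝ (Fin n) → EuclideanSpace ℝ (Fin p) → ℝ)
    (Γ : EuclideanSpace ℝ (Fin n) → EuclideanSpace ℝ (Fin p) → ℝ)
    (hf : ContDiff ℝ 1
      (fun q : ℝ × EuclideanSpace ℝ (Fin n) × EuclideanSpace ℝ (Fin p) => f q.1 q.2.1 q.2.2))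
    (hγ : ContDiff ℝ 1
      (fun q : ℝ × EuclideanSpace ℝ (Fin n) × EuclideanSpace ℝ (Fin p) => γ q.1 q.2.1 q.2.2))
    (hΓ : ContDiff ℝ 1
      (fun q : EuclideanSpace ℝ (Fin n) × EuclideanSpace ℝ (Fin p) => Γ q.1 q.2))
    (x : EuclideanSpace ℝ (Fin p) → ℝ → EuclideanSpace ℝ (Fin n))
    (hx : ContDiffOn ℝ 2
      (fun q : EuclideanSpace ℝ (Fin p) × ℝ => x q.1 q.2)
      (Set.univ ×ˢ Set.Icc (0 : ℝ) T))
    (hode : ∀ θ, ∀ t ∈ Set.Icc (0 : ℝ) T,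
      HasDerivWithinAt (x θ) (f t (x θ t) θ) (Set.Icc (0 : ℝ) T) t)
    (x₀ : EuclideanSpace ℝ (Fin n)) (hx0 : ∀ θ, x θ 0 = x₀)
    (θ₀ : EuclideanSpace ℝ (Fin p))
    (l l' : ℝ → EuclideanSpace ℝ (Fin n))
    (hl : ∀ t ∈ Set.Icc (0 : ℝ) T, HasDerivWithinAt l (l' t) (Set.Icc (0 : ℝ) T) t)
    (hl' : ContinuousOn l' (Set.Icc (0 : ℝ) T))
    (hadj : ∀ t ∈ Set.Icc (0 : ℝ) T,
      innerSL ℝ (l' t)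
        = -((innerSL ℝ (l t)).comp (fderiv ℝ (fun y => f t y θ₀) (x θ₀ t)))
          - fderiv ℝ (fun y => γ t y θ₀) (x θ₀ t))
    (hlT : innerSL ℝ (l T) = fderiv ℝ (fun y => Γ y θ₀) (x θ₀ T)) :
    HasFDerivAt (fun θ => (∫ t in (0 : ℝ)..T, γ t (x θ t) θ) + Γ (x θ T) θ)
      (fderiv ℝ (fun θ => Γ (x θ₀ T) θ) θ₀
        + ∫ t in (0 : ℝ)..T,
            ((innerSL ℝ (l t)).comp (fderiv ℝ (fun θ => f t (x θ₀ t) θ) θ₀)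
              + fderiv ℝ (fun θ => γ t (x θ₀ t) θ) θ₀))
      θ₀ := by
  have hI : uIcc 0 T = Icc 0 T := uIcc_of_le hT.le
  have hxθ : HasContinuousParamFDerivOn x (Icc 0 T) :=
    (hx.of_le one_le_two).hasContinuousParamFDerivOn (uniqueDiffOn_Icc hT)
  have hgraph : HasContinuousParamFDerivOn (fun θ t => (t, x θ t, θ)) (Icc 0 T) :=
    continuousOn_id.hasContinuousParamFDerivOn.prodMk (hxθ.prodMk hasContinuousParamFDerivOn_param)
  have hγx : HasContinuousParamFDerivOn (fun θ t => γ t (x θ t) θ) (Icc 0 T) := hgraph.comp hγ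
  have hfx : HasContinuousParamFDerivOn (fun θ t => f t (x θ t) θ) (Icc 0 T) := hgraph.comp hf
  have hpair : HasContinuousParamFDerivOn (fun θ t => ⟪l t, f t (x θ t) θ⟫ + ⟪l' t, x θ t⟫)
      (Icc 0 T) :=
    (hfx.clm_apply ((innerSL ℝ).continuous.comp_continuousOn
      fun t ht => (hl t ht).continuousWithinAt)).add
      (hxθ.clm_apply ((innerSL ℝ).continuous.comp_continuousOn hl'))
  have hJ : ∀ θ, (∫ t in (0 : ℝ)..T, γ t (x θ t) θ) + Γ (x θ T) θ =
      (∫ t in (0 : ℝ)..T, (γ t (x θ t) θ + (⟪l t, f t (x θ t) θ⟫ + ⟪l' t, x θ t⟫)))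
        + ((Γ (x θ T) θ - ⟪l T, x θ T⟫) + ⟪l 0, x₀⟫) := fun θ => by
    rw [intervalIntegral.integral_add ((hγx.continuousOn_apply θ).intervalIntegrable_of_Icc hT.le)
      ((hpair.continuousOn_apply θ).intervalIntegrable_of_Icc hT.le),
      intervalIntegral.integral_deriv_inner_eq_sub hT.le hl (hode θ) hl' (hfx.continuousOn_apply θ),
      hx0]
    ring
  obtain ⟨-, V, -, hV⟩ := hxθ
  have hrun := (hI ▸ hγx.add hpair).hasFDerivAt_intervalIntegral θ₀
  have hterm := hasFDerivAt_sub_inner_of_adjoint (hΓ.differentiable one_ne_zero _)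
    (hV T ⟨hT.le, le_rfl⟩ θ₀) hlT
  simp only [hJ]
  refine (hrun.add (hterm.add_const _)).congr_fderiv ?_
  rw [add_comm]
  congr 1
  refine intervalIntegral.integral_congr fun t ht => ?_
  rw [hI] at ht
  have hslice : Differentiable ℝ
      fun q : EuclideanSpace ℝ (Fin n) × EuclideanSpace ℝ (Fin p) => (t, q) :=
    (differentiable_const t).prodMk differentiable_id
  exact (hasFDerivAt_add_inner_add_inner_of_adjoint (φ := fun q => γ t q.1 q.2)
    (ψ := fun q => f t q.1 q.2) ((hγ.differentiable one_ne_zero).comp hslice _)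
    ((hf.differentiable one_ne_zero).comp hslice _) (hV t ht θ₀) (hadj t ht)).fderiv
end

section
/- Let f : ℝ × ℝⁿ × ℝᵖ → ℝⁿ, γ : ℝ × ℝⁿ × ℝᵖ → ℝ and Γ : ℝⁿ × ℝᵖ → ℝ be continuously differentiable, and let x : ℝᵖ × [0,T] → ℝⁿ be twice continuously differentiable with ∂x/∂t(θ,t) = f(t, x(θ,t), θ) and x(θ,0) = x₀ independent of θ. Define J(θ) = ∫₀ᵀ γ(t, x(θ,t), θ) dt + Γ(x(θ,T), θ). Fix θ₀ ∈ ℝᵖ, let S(t) be the Fréchet derivative of θ ↦ x(θ,t) at θ₀, and let λ : [0,T] → ℝⁿ be ANY continuously differentiable function. Then dJ/dθ at θ₀ equals D_θ Γ(x(θ₀,T), θ₀) + ∫₀ᵀ [D_θ γ + λ(t)ᵀ D_θ f] dt + [D_x Γ(x(θ₀,T), θ₀) − λ(T)ᵀ] ∘ S(T) + ∫₀ᵀ [λ'(t)ᵀ + λ(t)ᵀ D_x f + D_x γ] ∘ S(t) dt, where all partial derivatives D_x f, D_θ f, D_x γ, D_θ γ are evaluated at (t, x(θ₀,t), θ₀)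 and λ(t)ᵀ M denotes composition of the linear map M with the functional y ↦ ⟨λ(t), y⟩. -/
open Set Metric MeasureTheory intervalIntegral

open Set Metric MeasureTheory intervalIntegral

lemma aux_param {H : Type*} [NormedAddCommGroup H] [NormedSpace ℝ H]
    [FiniteDimensional ℝ H]
    (T : ℝ) (hT : 0 < T) (θ₀ : H)
    (F : H → ℝ → ℝ) (F' : H → ℝ → H →L[ℝ] ℝ)
    (hFc : ContinuousOn (fun q : H × ℝ => F q.1 q.2) (closedBall θ₀ 1 ×ˢ Icc 0 T))
    (hF'c : ContinuousOn (fun q : H × ℝ => F' q.1 q.2) (closedBall θ₀ 1 ×ˢ Icc 0 T))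
    (hder : ∀ θ ∈ ball θ₀ 1, ∀ t ∈ Icc (0:ℝ) T, HasFDerivAt (F · t) (F' θ t) θ) :
    HasFDerivAt (fun θ => ∫ t in (0:ℝ)..T, F θ t) (∫ t in (0:ℝ)..T, F' θ₀ t) θ₀ := by
  have hIsub : Set.uIoc (0:ℝ) T ⊆ Icc 0 T := by
    rw [uIoc_of_le hT.le]; exact Ioc_subset_Icc_self
  have hmem : ∀ θ ∈ closedBall θ₀ 1, ∀ t ∈ Icc (0:ℝ) T, ((θ,t) : H × ℝ) ∈ closedBall θ₀ 1 ×ˢ Icc 0 T :=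
    fun θ hθ t ht => ⟨hθ, ht⟩
  have hslice : ∀ θ ∈ closedBall θ₀ 1, ContinuousOn (F θ) (Icc 0 T) := by
    intro θ hθ
    exact hFc.comp (Continuous.prodMk_right θ).continuousOn (fun t ht => ⟨hθ, ht⟩)
  have hslice' : ContinuousOn (F' θ₀) (Icc 0 T) := by
    exact hF'c.comp (Continuous.prodMk_right θ₀).continuousOn
      (fun t ht => ⟨mem_closedBall_self zero_le_one, ht⟩)
  have hmeas : ∀ᶠ θ in nhds θ₀, AEStronglyMeasurable (F θ) (volume.restrict (Set.uIoc (0:ℝ) T)) := by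
    filter_upwards [ball_mem_nhds θ₀ one_pos] with θ hθ
    exact (((hslice θ (ball_subset_closedBall hθ)).aestronglyMeasurable
      measurableSet_Icc).mono_measure (Measure.restrict_mono hIsub le_rfl))
  have hint : IntervalIntegrable (F θ₀) volume 0 T := by
    apply ContinuousOn.intervalIntegrable
    rw [uIcc_of_le hT.le]
    exact hslice θ₀ (mem_closedBall_self zero_le_one)
  have hmeas' : AEStronglyMeasurable (F' θ₀) (volume.restrict (Set.uIoc (0:ℝ) T)) :=
    (hslice'.aestronglyMeasurable measurableSet_Icc).mono_measure
      (Measure.restrict_mono hIsub le_rfl)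
  obtain ⟨C, hC⟩ := ((isCompact_closedBall θ₀ 1).prod isCompact_Icc).exists_bound_of_continuousOn hF'c
  refine hasFDerivAt_integral_of_dominated_of_fderiv_le (F' := F') (bound := fun _ => C)
    (ball_mem_nhds θ₀ one_pos) hmeas hint hmeas' ?_ intervalIntegrable_const ?_
  · exact Filter.Eventually.of_forall fun t ht θ hθ =>
      hC (θ, t) ⟨ball_subset_closedBall hθ, hIsub ht⟩
  · exact Filter.Eventually.of_forall fun t ht θ hθ => hder θ hθ t (hIsub ht)

lemma aux_ftc (T : ℝ) (hT : 0 < T) (g g' : ℝ → ℝ)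
    (hcont : ContinuousOn g (Icc 0 T))
    (hderiv : ∀ t ∈ Icc (0:ℝ) T, HasDerivWithinAt g (g' t) (Icc 0 T) t)
    (hg' : ContinuousOn g' (Icc 0 T)) :
    ∫ t in (0:ℝ)..T, g' t = g T - g 0 := by
  apply intervalIntegral.integral_eq_sub_of_hasDeriv_right_of_le hT.le hcont
  · intro t ht
    exact (hderiv t (Ioo_subset_Icc_self ht)).mono_of_mem_nhdsWithin
      (Filter.mem_of_superset (Ioc_mem_nhdsGT_of_mem ⟨le_rfl, ht.2⟩)
        (fun u h => ⟨ht.1.le.trans h.1.le, h.2⟩))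
  · apply ContinuousOn.intervalIntegrable
    rwa [uIcc_of_le hT.le]



set_option maxHeartbeats 2000000 in
/-- **Key intermediate identity in the proof of Theorem 2 (deterministic setting).**
For `J(θ) = ∫₀ᵀ γ(t, x(θ,t), θ) dt + Γ(x(θ,T), θ)` with `ẋ = f(t, x, θ)`,
`x(θ,0) = x₀` independent of `θ`, `S(t)` the Fréchet derivative of `θ ↦ x(θ,t)` at `θ₀`,
and ANY C¹ multiplier `λ : [0,T] → ℝⁿ`,
`dJ/dθ|_{θ₀} = D_θ Γ + ∫₀ᵀ [D_θ γ + λᵀ D_θ f] dt + [D_x Γ − λ(T)ᵀ] ∘ S(T)`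
`+ ∫₀ᵀ [λ'(t)ᵀ + λ(t)ᵀ D_x f + D_x γ] ∘ S(t) dt`,
where `λ(t)ᵀ M = (innerSL ℝ (l t)).comp M`. -/
theorem lagrangian_decomposition_identity
    (n p : ℕ) (T : ℝ) (hT : 0 < T)
    (f : ℝ → EuclideanSpace ℝ (Fin n) → EuclideanSpace ℝ (Fin p) → EuclideanSpace ℝ (Fin n))
    (γ : ℝ → EuclideanSpace ℝ (Fin n) → EuclideanSpace ℝ (Fin p) → ℝ)
    (Γ : EuclideanSpace ℝ (Fin n) → EuclideanSpace ℝ (Fin p) → ℝ)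
    (hf : ContDiff ℝ 1
      (fun q : ℝ × EuclideanSpace ℝ (Fin n) × EuclideanSpace ℝ (Fin p) => f q.1 q.2.1 q.2.2))
    (hγ : ContDiff ℝ 1
      (fun q : ℝ × EuclideanSpace ℝ (Fin n) × EuclideanSpace ℝ (Fin p) => γ q.1 q.2.1 q.2.2))
    (hΓ : ContDiff ℝ 1
      (fun q : EuclideanSpace ℝ (Fin n) × EuclideanSpace ℝ (Fin p) => Γ q.1 q.2))
    (x : EuclideanSpace ℝ (Fin p) → ℝ → EuclideanSpace ℝ (Fin n))
    (hx : ContDiffOn ℝ 2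
      (fun q : EuclideanSpace ℝ (Fin p) × ℝ => x q.1 q.2)
      (Set.univ ×ˢ Set.Icc (0 : ℝ) T))
    (hode : ∀ θ, ∀ t ∈ Set.Icc (0 : ℝ) T,
      HasDerivWithinAt (x θ) (f t (x θ t) θ) (Set.Icc (0 : ℝ) T) t)
    (x₀ : EuclideanSpace ℝ (Fin n)) (hx0 : ∀ θ, x θ 0 = x₀)
    (θ₀ : EuclideanSpace ℝ (Fin p))
    (S : ℝ → EuclideanSpace ℝ (Fin p) →L[ℝ] EuclideanSpace ℝ (Fin n))
    (hS : ∀ t ∈ Set.Icc (0 : ℝ) T, HasFDerivAt (fun θ => x θ t) (S t) θ₀)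
    (l l' : ℝ → EuclideanSpace ℝ (Fin n))
    (hl : ∀ t ∈ Set.Icc (0 : ℝ) T, HasDerivWithinAt l (l' t) (Set.Icc (0 : ℝ) T) t)
    (hl' : ContinuousOn l' (Set.Icc (0 : ℝ) T)) :
    HasFDerivAt (fun θ => (∫ t in (0 : ℝ)..T, γ t (x θ t) θ) + Γ (x θ T) θ)
      (fderiv ℝ (fun θ => Γ (x θ₀ T) θ) θ₀
        + (∫ t in (0 : ℝ)..T,
            (fderiv ℝ (fun θ => γ t (x θ₀ t) θ) θ₀
              + (innerSL ℝ (l t)).comp (fderiv ℝ (fun θ => f t (x θ₀ t) θ) θ₀)))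
        + (fderiv ℝ (fun y => Γ y θ₀) (x θ₀ T) - innerSL ℝ (l T)).comp (S T)
        + ∫ t in (0 : ℝ)..T,
            ((innerSL ℝ (l' t)
              + (innerSL ℝ (l t)).comp (fderiv ℝ (fun y => f t y θ₀) (x θ₀ t))
              + fderiv ℝ (fun y => γ t y θ₀) (x θ₀ t)).comp (S t)))
      θ₀ := by

  classical
  have hT0 : (0:ℝ) ∈ Set.Icc (0:ℝ) T := ⟨le_rfl, hT.le⟩
  have hTT : T ∈ Set.Icc (0:ℝ) T := ⟨hT.le, le_rfl⟩
  have hsu : UniqueDiffOn ℝ (Set.univ ×ˢ Set.Icc (0:ℝ) T) :=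
    (uniqueDiffOn_univ : UniqueDiffOn ℝ (Set.univ : Set (EuclideanSpace ℝ (Fin p)))).prod (uniqueDiffOn_Icc hT)
  have hlc : ContinuousOn l (Set.Icc (0:ℝ) T) := fun t ht => (hl t ht).continuousWithinAt
  have hxc : ContinuousOn (fun q : EuclideanSpace ℝ (Fin p) × ℝ => x q.1 q.2)
      (Set.univ ×ˢ Set.Icc (0:ℝ) T) := hx.continuousOn
  -- the partial derivative in θ of x, jointly continuous
  obtain ⟨DX, hDXder, hDXc⟩ :
      ∃ DX : EuclideanSpace ℝ (Fin p) → ℝ →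
        (EuclideanSpace ℝ (Fin p) →L[ℝ] EuclideanSpace ℝ (Fin n)),
        (∀ θ, ∀ t ∈ Set.Icc (0:ℝ) T, HasFDerivAt (fun θ' => x θ' t) (DX θ t) θ) ∧
        ContinuousOn (fun q : EuclideanSpace ℝ (Fin p) × ℝ => DX q.1 q.2)
          (Set.univ ×ˢ Set.Icc (0:ℝ) T) := by
    refine ⟨fun θ t => (fderivWithin ℝ (fun q : EuclideanSpace ℝ (Fin p) × ℝ => x q.1 q.2)
      (Set.univ ×ˢ Set.Icc (0:ℝ) T) (θ, t)).comp (ContinuousLinearMap.inl ℝ _ ℝ), ?_, ?_⟩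
    · intro θ t ht
      have hmem : ((θ, t) : EuclideanSpace ℝ (Fin p) × ℝ) ∈ Set.univ ×ˢ Set.Icc (0:ℝ) T :=
        ⟨Set.mem_univ _, ht⟩
      have hjoint := ((hx.differentiableOn two_ne_zero) (θ, t) hmem).hasFDerivWithinAt
      have hin : HasFDerivAt (fun θ' : EuclideanSpace ℝ (Fin p) => ((θ', t) :
          EuclideanSpace ℝ (Fin p) × ℝ)) (ContinuousLinearMap.inl ℝ _ ℝ) θ :=
        hasFDerivAt_prodMk_left θ t
      have := hjoint.comp θ (hin.hasFDerivWithinAt (s := Set.univ))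
        (fun θ' _ => Set.mk_mem_prod (Set.mem_univ _) ht)
      rw [hasFDerivWithinAt_univ] at this
      exact this
    · exact (hx.continuousOn_fderivWithin hsu one_le_two).clm_comp continuousOn_const
  have hSDX : ∀ t ∈ Set.Icc (0:ℝ) T, S t = DX θ₀ t := fun t ht =>
    (hS t ht).unique (hDXder θ₀ t ht)
  -- injections
  set j2 : EuclideanSpace ℝ (Fin n) →L[ℝ]
      ℝ × EuclideanSpace ℝ (Fin n) × EuclideanSpace ℝ (Fin p) :=
    (0 : EuclideanSpace ℝ (Fin n) →L[ℝ] ℝ).prod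
      ((ContinuousLinearMap.id ℝ _).prod (0 : _ →L[ℝ] EuclideanSpace ℝ (Fin p))) with hj2
  set j3 : EuclideanSpace ℝ (Fin p) →L[ℝ]
      ℝ × EuclideanSpace ℝ (Fin n) × EuclideanSpace ℝ (Fin p) :=
    (0 : EuclideanSpace ℝ (Fin p) →L[ℝ] ℝ).prod
      ((0 : _ →L[ℝ] EuclideanSpace ℝ (Fin n)).prod (ContinuousLinearMap.id ℝ _)) with hj3
  have hj2app : ∀ y : EuclideanSpace ℝ (Fin n), j2 y = (0, y, 0) := fun y => rfl
  have hj3app : ∀ v : EuclideanSpace ℝ (Fin p), j3 v = (0, 0, v) := fun v => rfl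
  -- abbreviations for the joint maps
  set γb : ℝ × EuclideanSpace ℝ (Fin n) × EuclideanSpace ℝ (Fin p) → ℝ :=
    fun q => γ q.1 q.2.1 q.2.2 with hγb
  set fb : ℝ × EuclideanSpace ℝ (Fin n) × EuclideanSpace ℝ (Fin p) →
      EuclideanSpace ℝ (Fin n) := fun q => f q.1 q.2.1 q.2.2 with hfb
  set Γb : EuclideanSpace ℝ (Fin n) × EuclideanSpace ℝ (Fin p) → ℝ :=
    fun q => Γ q.1 q.2 with hΓb
  -- derivative of the curve θ ↦ (t, x θ t, θ)
  have hKder : ∀ θ, ∀ t ∈ Set.Icc (0:ℝ) T,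
      HasFDerivAt (fun θ' => ((t, x θ' t, θ') :
        ℝ × EuclideanSpace ℝ (Fin n) × EuclideanSpace ℝ (Fin p)))
        (j2.comp (DX θ t) + j3) θ := by
    intro θ t ht
    have h1 := HasFDerivAt.prodMk (hasFDerivAt_const t θ) (HasFDerivAt.prodMk (hDXder θ t ht) (hasFDerivAt_id θ))
    refine h1.congr_fderiv ?_
    refine ContinuousLinearMap.ext fun v => ?_
    simp [hj2, hj3, Prod.ext_iff]
  have hKc : ContinuousOn (fun q : EuclideanSpace ℝ (Fin p) × ℝ =>
      j2.comp (DX q.1 q.2) + j3) (Set.univ ×ˢ Set.Icc (0:ℝ) T) :=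
    (continuousOn_const.clm_comp hDXc).add continuousOn_const
  -- slice fderiv identities
  have hsliceγ3 : ∀ (t : ℝ) (c : EuclideanSpace ℝ (Fin n)),
      fderiv ℝ (fun θ => γ t c θ) θ₀ = (fderiv ℝ γb (t, c, θ₀)).comp j3 := by
    intro t c
    have hin : HasFDerivAt (fun θ : EuclideanSpace ℝ (Fin p) =>
        ((t, c, θ) : ℝ × EuclideanSpace ℝ (Fin n) × EuclideanSpace ℝ (Fin p))) j3 θ₀ :=
      HasFDerivAt.prodMk (hasFDerivAt_const t θ₀) (HasFDerivAt.prodMk (hasFDerivAt_const c θ₀) (hasFDerivAt_id θ₀))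
    exact HasFDerivAt.fderiv (by have h := ((hγ.differentiable one_ne_zero) (t, c, θ₀)).hasFDerivAt.comp θ₀ hin; exact h)
  have hslicef3 : ∀ (t : ℝ) (c : EuclideanSpace ℝ (Fin n)),
      fderiv ℝ (fun θ => f t c θ) θ₀ = (fderiv ℝ fb (t, c, θ₀)).comp j3 := by
    intro t c
    have hin : HasFDerivAt (fun θ : EuclideanSpace ℝ (Fin p) =>
        ((t, c, θ) : ℝ × EuclideanSpace ℝ (Fin n) × EuclideanSpace ℝ (Fin p))) j3 θ₀ :=
      HasFDerivAt.prodMk (hasFDerivAt_const t θ₀) (HasFDerivAt.prodMk (hasFDerivAt_const c θ₀) (hasFDerivAt_id θ₀))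
    exact HasFDerivAt.fderiv (by have h := ((hf.differentiable one_ne_zero) (t, c, θ₀)).hasFDerivAt.comp θ₀ hin; exact h)
  have hsliceγ2 : ∀ (t : ℝ) (c : EuclideanSpace ℝ (Fin n)),
      fderiv ℝ (fun y => γ t y θ₀) c = (fderiv ℝ γb (t, c, θ₀)).comp j2 := by
    intro t c
    have hin : HasFDerivAt (fun y : EuclideanSpace ℝ (Fin n) =>
        ((t, y, θ₀) : ℝ × EuclideanSpace ℝ (Fin n) × EuclideanSpace ℝ (Fin p))) j2 c :=
      HasFDerivAt.prodMk (hasFDerivAt_const t c) (HasFDerivAt.prodMk (hasFDerivAt_id c) (hasFDerivAt_const θ₀ c))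
    exact HasFDerivAt.fderiv (by have h := ((hγ.differentiable one_ne_zero) (t, c, θ₀)).hasFDerivAt.comp c hin; exact h)
  have hslicef2 : ∀ (t : ℝ) (c : EuclideanSpace ℝ (Fin n)),
      fderiv ℝ (fun y => f t y θ₀) c = (fderiv ℝ fb (t, c, θ₀)).comp j2 := by
    intro t c
    have hin : HasFDerivAt (fun y : EuclideanSpace ℝ (Fin n) =>
        ((t, y, θ₀) : ℝ × EuclideanSpace ℝ (Fin n) × EuclideanSpace ℝ (Fin p))) j2 c :=
      HasFDerivAt.prodMk (hasFDerivAt_const t c) (HasFDerivAt.prodMk (hasFDerivAt_id c) (hasFDerivAt_const θ₀ c))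
    exact HasFDerivAt.fderiv (by have h := ((hf.differentiable one_ne_zero) (t, c, θ₀)).hasFDerivAt.comp c hin; exact h)

  -- continuity auxiliaries
  have hsub : closedBall θ₀ 1 ×ˢ Set.Icc (0:ℝ) T ⊆ Set.univ ×ˢ Set.Icc (0:ℝ) T :=
    Set.prod_mono (Set.subset_univ _) Set.Subset.rfl
  have hq : ContinuousOn (fun q : EuclideanSpace ℝ (Fin p) × ℝ =>
      ((q.2, x q.1 q.2, q.1) : ℝ × EuclideanSpace ℝ (Fin n) × EuclideanSpace ℝ (Fin p)))
      (closedBall θ₀ 1 ×ˢ Set.Icc (0:ℝ) T) :=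
    continuous_snd.continuousOn.prodMk ((hxc.mono hsub).prodMk continuous_fst.continuousOn)
  have hlq : ContinuousOn (fun q : EuclideanSpace ℝ (Fin p) × ℝ => l q.2)
      (closedBall θ₀ 1 ×ˢ Set.Icc (0:ℝ) T) :=
    hlc.comp continuous_snd.continuousOn (fun q hq => hq.2)
  have hl'q : ContinuousOn (fun q : EuclideanSpace ℝ (Fin p) × ℝ => l' q.2)
      (closedBall θ₀ 1 ×ˢ Set.Icc (0:ℝ) T) :=
    hl'.comp continuous_snd.continuousOn (fun q hq => hq.2)
  -- the parametric integrand and its θ-derivative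
  set F : EuclideanSpace ℝ (Fin p) → ℝ → ℝ := fun θ t =>
    γ t (x θ t) θ + ((inner ℝ (l t) (f t (x θ t) θ) : ℝ) + (inner ℝ (l' t) (x θ t) : ℝ))
    with hFdef
  set F' : EuclideanSpace ℝ (Fin p) → ℝ → (EuclideanSpace ℝ (Fin p) →L[ℝ] ℝ) := fun θ t =>
    (fderiv ℝ γb (t, x θ t, θ)).comp (j2.comp (DX θ t) + j3)
      + ((innerSL ℝ (l t)).comp
          ((fderiv ℝ fb (t, x θ t, θ)).comp (j2.comp (DX θ t) + j3))
        + (innerSL ℝ (l' t)).comp (DX θ t)) with hF'def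
  have hF'der : ∀ θ : EuclideanSpace ℝ (Fin p), ∀ t ∈ Set.Icc (0:ℝ) T,
      HasFDerivAt (fun θ' => F θ' t) (F' θ t) θ := by
    intro θ t ht
    refine HasFDerivAt.add ?_ (HasFDerivAt.add ?_ ?_)
    · exact ((hγ.differentiable one_ne_zero) _).hasFDerivAt.comp θ (hKder θ t ht)
    · exact (innerSL ℝ (l t)).hasFDerivAt.comp θ
        (((hf.differentiable one_ne_zero) _).hasFDerivAt.comp θ (hKder θ t ht))
    · exact (innerSL ℝ (l' t)).hasFDerivAt.comp θ (hDXder θ t ht)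
  have hFc : ContinuousOn (fun q : EuclideanSpace ℝ (Fin p) × ℝ => F q.1 q.2)
      (closedBall θ₀ 1 ×ˢ Set.Icc (0:ℝ) T) := by
    refine (hγ.continuous.comp_continuousOn hq).add (ContinuousOn.add ?_ ?_)
    · exact hlq.inner (hf.continuous.comp_continuousOn hq)
    · exact hl'q.inner (hxc.mono hsub)
  have hF'c : ContinuousOn (fun q : EuclideanSpace ℝ (Fin p) × ℝ => F' q.1 q.2)
      (closedBall θ₀ 1 ×ˢ Set.Icc (0:ℝ) T) := by
    refine ContinuousOn.add
      (((hγ.continuous_fderiv one_ne_zero).comp_continuousOn hq).clm_comp (hKc.mono hsub))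
      (ContinuousOn.add ?_ ?_)
    · exact ((innerSL ℝ).continuous.comp_continuousOn hlq).clm_comp
        (((hf.continuous_fderiv one_ne_zero).comp_continuousOn hq).clm_comp (hKc.mono hsub))
    · exact ((innerSL ℝ).continuous.comp_continuousOn hl'q).clm_comp (hDXc.mono hsub)
  have Hint : HasFDerivAt (fun θ => ∫ t in (0:ℝ)..T, F θ t)
      (∫ t in (0:ℝ)..T, F' θ₀ t) θ₀ :=
    aux_param T hT θ₀ F F' hFc hF'c (fun θ _ t ht => hF'der θ t ht)
  -- the boundary part
  have hBder : HasFDerivAt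
      (fun θ => Γ (x θ T) θ - (inner ℝ (l T) (x θ T) : ℝ) + (inner ℝ (l 0) x₀ : ℝ))
      ((fderiv ℝ Γb (x θ₀ T, θ₀)).comp ((S T).prod (ContinuousLinearMap.id ℝ _))
        - (innerSL ℝ (l T)).comp (S T)) θ₀ := by
    refine HasFDerivAt.add_const _ ?_
    exact (((hΓ.differentiable one_ne_zero) _).hasFDerivAt.comp θ₀
      (HasFDerivAt.prodMk (hS T hTT) (hasFDerivAt_id θ₀))).sub
      ((innerSL ℝ (l T)).hasFDerivAt.comp θ₀ (hS T hTT))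
  -- rewriting J using the fundamental theorem of calculus
  have hJrw : (fun θ => (∫ t in (0:ℝ)..T, γ t (x θ t) θ) + Γ (x θ T) θ)
      = (fun θ => (∫ t in (0:ℝ)..T, F θ t)
          + (Γ (x θ T) θ - (inner ℝ (l T) (x θ T) : ℝ) + (inner ℝ (l 0) x₀ : ℝ))) := by
    funext θ
    have hxθ : ContinuousOn (fun t => x θ t) (Set.Icc (0:ℝ) T) :=
      hxc.comp (Continuous.prodMk_right θ).continuousOn (fun t ht => ⟨Set.mem_univ _, ht⟩)
    have hcθ : ContinuousOn (fun t =>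
        ((t, x θ t, θ) : ℝ × EuclideanSpace ℝ (Fin n) × EuclideanSpace ℝ (Fin p)))
        (Set.Icc (0:ℝ) T) :=
      continuous_id.continuousOn.prodMk (hxθ.prodMk continuousOn_const)
    have hγint : IntervalIntegrable (fun t => γ t (x θ t) θ) volume 0 T := by
      apply ContinuousOn.intervalIntegrable
      rw [Set.uIcc_of_le hT.le]
      exact hγ.continuous.comp_continuousOn hcθ
    have hbc_cont : ContinuousOn
        (fun t => (inner ℝ (l t) (f t (x θ t) θ) : ℝ) + (inner ℝ (l' t) (x θ t) : ℝ))
        (Set.Icc (0:ℝ) T) :=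
      (hlc.inner (hf.continuous.comp_continuousOn hcθ)).add (hl'.inner hxθ)
    have hbcint : IntervalIntegrable
        (fun t => (inner ℝ (l t) (f t (x θ t) θ) : ℝ) + (inner ℝ (l' t) (x θ t) : ℝ))
        volume 0 T := by
      apply ContinuousOn.intervalIntegrable
      rwa [Set.uIcc_of_le hT.le]
    have hftc : (∫ t in (0:ℝ)..T,
        ((inner ℝ (l t) (f t (x θ t) θ) : ℝ) + (inner ℝ (l' t) (x θ t) : ℝ)))
        = (inner ℝ (l T) (x θ T) : ℝ) - (inner ℝ (l 0) (x θ 0) : ℝ) := by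
      refine aux_ftc T hT (fun t => (inner ℝ (l t) (x θ t) : ℝ)) _ (hlc.inner hxθ)
        (fun t ht => ?_) hbc_cont
      exact (hl t ht).inner ℝ (hode θ t ht)
    have hsplit : (∫ t in (0:ℝ)..T, F θ t) = (∫ t in (0:ℝ)..T, γ t (x θ t) θ)
        + ∫ t in (0:ℝ)..T,
            ((inner ℝ (l t) (f t (x θ t) θ) : ℝ) + (inner ℝ (l' t) (x θ t) : ℝ)) := by
      simp only [hFdef]
      exact intervalIntegral.integral_add hγint hbcint
    rw [hsplit, hftc, hx0 θ]
    ring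
  rw [hJrw]
  refine (Hint.add hBder).congr_fderiv ?_

  -- canonical forms for the slice derivatives of Γ
  have hsliceΓ3 : fderiv ℝ (fun θ => Γ (x θ₀ T) θ) θ₀
      = (fderiv ℝ Γb (x θ₀ T, θ₀)).comp
        ((0 : EuclideanSpace ℝ (Fin p) →L[ℝ] EuclideanSpace ℝ (Fin n)).prod
          (ContinuousLinearMap.id ℝ _)) :=
    HasFDerivAt.fderiv (((hΓ.differentiable one_ne_zero) _).hasFDerivAt.comp θ₀
      (HasFDerivAt.prodMk (hasFDerivAt_const (x θ₀ T) θ₀) (hasFDerivAt_id θ₀)))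
  have hsliceΓ2 : fderiv ℝ (fun y => Γ y θ₀) (x θ₀ T)
      = (fderiv ℝ Γb (x θ₀ T, θ₀)).comp
        ((ContinuousLinearMap.id ℝ _).prod
          (0 : EuclideanSpace ℝ (Fin n) →L[ℝ] EuclideanSpace ℝ (Fin p))) :=
    HasFDerivAt.fderiv (((hΓ.differentiable one_ne_zero) _).hasFDerivAt.comp (x θ₀ T)
      (HasFDerivAt.prodMk (hasFDerivAt_id (x θ₀ T)) (hasFDerivAt_const θ₀ (x θ₀ T))))
  simp only [hsliceγ3, hslicef3, hsliceγ2, hslicef2, hsliceΓ3, hsliceΓ2]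
  -- replace S by DX under the second integral
  have hIB : (∫ t in (0:ℝ)..T,
      ((innerSL ℝ (l' t)
        + (innerSL ℝ (l t)).comp ((fderiv ℝ fb (t, x θ₀ t, θ₀)).comp j2)
        + (fderiv ℝ γb (t, x θ₀ t, θ₀)).comp j2).comp (S t)))
      = ∫ t in (0:ℝ)..T,
      ((innerSL ℝ (l' t)
        + (innerSL ℝ (l t)).comp ((fderiv ℝ fb (t, x θ₀ t, θ₀)).comp j2)
        + (fderiv ℝ γb (t, x θ₀ t, θ₀)).comp j2).comp (DX θ₀ t)) := by
    refine intervalIntegral.integral_congr fun t ht => ?_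
    rw [Set.uIcc_of_le hT.le] at ht
    rw [hSDX t ht]
  rw [hIB]
  -- integrability of the two canonical integrands
  have hcθ₀ : ContinuousOn (fun t =>
      ((t, x θ₀ t, θ₀) : ℝ × EuclideanSpace ℝ (Fin n) × EuclideanSpace ℝ (Fin p)))
      (Set.Icc (0:ℝ) T) :=
    continuous_id.continuousOn.prodMk
      ((hxc.comp (Continuous.prodMk_right θ₀).continuousOn
        (fun t ht => ⟨Set.mem_univ _, ht⟩)).prodMk continuousOn_const)
  have hDXc₀ : ContinuousOn (fun t => DX θ₀ t) (Set.Icc (0:ℝ) T) :=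
    hDXc.comp (Continuous.prodMk_right θ₀).continuousOn (fun t ht => ⟨Set.mem_univ _, ht⟩)
  have hAint : IntervalIntegrable (fun t =>
      (fderiv ℝ γb (t, x θ₀ t, θ₀)).comp j3
        + (innerSL ℝ (l t)).comp ((fderiv ℝ fb (t, x θ₀ t, θ₀)).comp j3)) volume 0 T := by
    apply ContinuousOn.intervalIntegrable
    rw [Set.uIcc_of_le hT.le]
    exact (((hγ.continuous_fderiv one_ne_zero).comp_continuousOn hcθ₀).clm_comp
        continuousOn_const).add
      (((innerSL ℝ).continuous.comp_continuousOn hlc).clm_comp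
        (((hf.continuous_fderiv one_ne_zero).comp_continuousOn hcθ₀).clm_comp continuousOn_const))
  have hBint : IntervalIntegrable (fun t =>
      ((innerSL ℝ (l' t)
        + (innerSL ℝ (l t)).comp ((fderiv ℝ fb (t, x θ₀ t, θ₀)).comp j2)
        + (fderiv ℝ γb (t, x θ₀ t, θ₀)).comp j2).comp (DX θ₀ t))) volume 0 T := by
    apply ContinuousOn.intervalIntegrable
    rw [Set.uIcc_of_le hT.le]
    refine ContinuousOn.clm_comp ?_ hDXc₀
    refine ContinuousOn.add (ContinuousOn.add ?_ ?_) ?_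
    · exact (innerSL ℝ).continuous.comp_continuousOn hl'
    · exact ((innerSL ℝ).continuous.comp_continuousOn hlc).clm_comp
        (((hf.continuous_fderiv one_ne_zero).comp_continuousOn hcθ₀).clm_comp continuousOn_const)
    · exact ((hγ.continuous_fderiv one_ne_zero).comp_continuousOn hcθ₀).clm_comp continuousOn_const
  -- the combined integrand equals F' θ₀
  have e1 : ((∫ t in (0:ℝ)..T,
      ((fderiv ℝ γb (t, x θ₀ t, θ₀)).comp j3
        + (innerSL ℝ (l t)).comp ((fderiv ℝ fb (t, x θ₀ t, θ₀)).comp j3)))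
      + ∫ t in (0:ℝ)..T,
      ((innerSL ℝ (l' t)
        + (innerSL ℝ (l t)).comp ((fderiv ℝ fb (t, x θ₀ t, θ₀)).comp j2)
        + (fderiv ℝ γb (t, x θ₀ t, θ₀)).comp j2).comp (DX θ₀ t)))
      = ∫ t in (0:ℝ)..T, F' θ₀ t := by
    rw [← intervalIntegral.integral_add hAint hBint]
    refine intervalIntegral.integral_congr fun t ht => ?_
    refine ContinuousLinearMap.ext fun v => ?_
    have hsplit3 : ((0 : ℝ), DX θ₀ t v, v) = ((0 : ℝ), DX θ₀ t v, 0) + ((0 : ℝ), 0, v) := by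
      simp
    simp only [hF'def, ContinuousLinearMap.add_apply, ContinuousLinearMap.comp_apply,
      hj2app, hj3app, ContinuousLinearMap.prod_apply, ContinuousLinearMap.zero_apply,
      ContinuousLinearMap.id_apply, Prod.mk_add_mk, add_zero, zero_add]
    rw [hsplit3, map_add, map_add, map_add (innerSL ℝ (l t))]
    simp only [innerSL_apply_apply]
    ring
  have e2 : (fderiv ℝ Γb (x θ₀ T, θ₀)).comp
      ((0 : EuclideanSpace ℝ (Fin p) →L[ℝ] EuclideanSpace ℝ (Fin n)).prod
        (ContinuousLinearMap.id ℝ _))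
      + ((fderiv ℝ Γb (x θ₀ T, θ₀)).comp
          ((ContinuousLinearMap.id ℝ _).prod
            (0 : EuclideanSpace ℝ (Fin n) →L[ℝ] EuclideanSpace ℝ (Fin p)))
          - innerSL ℝ (l T)).comp (S T)
      = (fderiv ℝ Γb (x θ₀ T, θ₀)).comp ((S T).prod (ContinuousLinearMap.id ℝ _))
        - (innerSL ℝ (l T)).comp (S T) := by
    refine ContinuousLinearMap.ext fun v => ?_
    have hsplit2 : ((S T v, v) : EuclideanSpace ℝ (Fin n) × EuclideanSpace ℝ (Fin p))
        = (S T v, 0) + (0, v) := by simp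
    simp only [ContinuousLinearMap.add_apply, ContinuousLinearMap.comp_apply,
      ContinuousLinearMap.sub_apply, ContinuousLinearMap.prod_apply,
      ContinuousLinearMap.zero_apply, ContinuousLinearMap.id_apply]
    rw [hsplit2, map_add]
    ring
  rw [← e1, ← e2]
  abel
end

section
/- Let f : ℝ × ℝⁿ × ℝᵖ → ℝⁿ, γ : ℝ × ℝⁿ × ℝᵖ → ℝ and Γ : ℝⁿ × ℝᵖ → ℝ be continuously differentiable, and let x : ℝᵖ × [0,T] → ℝⁿ be twice continuously differentiable with ∂x/∂t(θ,t) = f(t, x(θ,t), θ) and x(θ,0) = x₀ independent of θ. Fix times 0 < t₁ < t₂ < ... < t_K < T and define J(θ) = Σ_{k=1}^K γ(t_k, x(θ,t_k), θ) + Γ(x(θ,T), θ). Fix θ₀ ∈ ℝᵖ and suppose λ : [0,T] → ℝⁿ is continuous on each interval (t_k, t_{k+1}] (with t_{K+1} = T), continuously differentiable there with λ'(t)ᵀ = −λ(t)ᵀ D_x f(t, x(θ₀,t), θ₀), terminal condition λ(T)ᵀ = D_x Γ(x(θ₀,T), θ₀), and jump condition λ(t_k⁻)ᵀ = λ(t_k)ᵀ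 + D_x γ(t_k, x(θ₀,t_k), θ₀) at each t_k, where λ(t_k⁻) is the left limit of λ at t_k. Then dJ/dθ at θ₀ equals D_θ Γ(x(θ₀,T), θ₀) + Σ_{k=1}^K D_θ γ(t_k, x(θ₀,t_k), θ₀) + ∫₀ᵀ λ(t)ᵀ D_θ f(t, x(θ₀,t), θ₀) dt, where λ(t)ᵀ M denotes composition of the linear map M with the functional y ↦ ⟨λ(t), y⟩. -/
/-!
Let `S(t) = ∂x/∂θ (θ₀, t)` be the sensitivity of the trajectory. Since `x` is `C²`, the mixed
partial derivatives commute, so differentiating the ODE in `θ` gives the variational equation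
`S' = D_x f ∘ S + D_θ f` with `S 0 = 0`. On each interval `[t_k, t_{k+1})` the adjoint equation
cancels the `D_x f` terms in `(λᵀ S)' = λ'ᵀ S + λᵀ S'`, leaving `(λᵀ S)' = λᵀ D_θ f`. Integrating
piece by piece and telescoping, `∫₀ᵀ λᵀ D_θ f` equals `λ(T)ᵀ S(T)` plus the jumps
`(λ(t_k⁻) - λ(t_k))ᵀ S(t_k) = D_x γ ∘ S(t_k)`: exactly the terms through which `x` enters `dJ/dθ`
by the chain rule.
-/

open Set Filter Topology Function ContinuousLinearMap MeasureTheory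

section Partials

variable {𝕜 : Type*} [NontriviallyNormedField 𝕜]
  {E F G : Type*} [NormedAddCommGroup E] [NormedSpace 𝕜 E] [NormedAddCommGroup F]
  [NormedSpace 𝕜 F] [NormedAddCommGroup G] [NormedSpace 𝕜 G]

theorem HasFDerivAt.uncurry_comp_partials {φ : E → F → G} {u : F → E} {u' : F →L[𝕜] E} {y : F}
    (hu : HasFDerivAt u u' y) (hφ : DifferentiableAt 𝕜 (uncurry φ) (u y, y)) :
    HasFDerivAt (fun y' => φ (u y') y')
      ((fderiv 𝕜 (fun z => φ z y) (u y)).comp u' + fderiv 𝕜 (fun y' => φ (u y) y') y) y := by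
  have hD := hφ.hasFDerivAt
  have hfst : HasFDerivAt (fun z => φ z y) ((fderiv 𝕜 (uncurry φ) (u y, y)).comp (inl 𝕜 E F))
      (u y) := hD.comp (f := fun z => (z, y)) (u y) (hasFDerivAt_prodMk_left (u y) y)
  have hsnd : HasFDerivAt (fun y' => φ (u y) y')
      ((fderiv 𝕜 (uncurry φ) (u y, y)).comp (inr 𝕜 E F)) y :=
    hD.comp (f := fun y' => (u y, y')) y (hasFDerivAt_prodMk_right (u y) y)
  rw [hfst.fderiv, hsnd.fderiv]
  refine (hD.comp (f := fun y' => (u y', y')) y (hu.prodMk (hasFDerivAt_id y))).congr_fderiv ?_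
  ext v
  simp [← map_add]

theorem DifferentiableWithinAt.hasFDerivAt_partial_fst {x : E → F → G} {s : Set F} {θ : E} {t : F}
    (hx : DifferentiableWithinAt 𝕜 (uncurry x) (univ ×ˢ s) (θ, t)) (ht : t ∈ s) :
    HasFDerivAt (fun θ' => x θ' t)
      ((fderivWithin 𝕜 (uncurry x) (univ ×ˢ s) (θ, t)).comp (inl 𝕜 E F)) θ :=
  hasFDerivWithinAt_univ.mp <| hx.hasFDerivWithinAt.comp (f := fun θ' => (θ', t)) θ
    (hasFDerivAt_prodMk_left θ t).hasFDerivWithinAt fun _ _ => mk_mem_prod trivial ht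

theorem DifferentiableOn.differentiableAt_partial_fst {x : E → F → G} {s : Set F} {θ : E} {t : F}
    (hx : DifferentiableOn 𝕜 (uncurry x) (univ ×ˢ s)) (ht : t ∈ s) :
    DifferentiableAt 𝕜 (fun θ' => x θ' t) θ :=
  ((hx _ ⟨trivial, ht⟩).hasFDerivAt_partial_fst ht).differentiableAt

theorem ContDiffOn.continuousOn_fderiv_partial_fst {x : E → F → G} {s : Set F} {n : WithTop ℕ∞}
    (hx : ContDiffOn 𝕜 n (uncurry x) (univ ×ˢ s)) (hs : UniqueDiffOn 𝕜 s) (hn : 1 ≤ n) (θ : E) :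
    ContinuousOn (fun t => fderiv 𝕜 (fun θ' => x θ' t) θ) s := by
  have hcont := (hx.continuousOn_fderivWithin (uniqueDiffOn_univ.prod hs) hn).comp
    (Continuous.prodMk_right θ).continuousOn fun t ht => ⟨trivial, ht⟩
  refine (hcont.clm_comp (continuousOn_const (c := inl 𝕜 E F))).congr fun t ht => ?_
  exact ((hx.differentiableOn (zero_lt_one.trans_le hn).ne' _ ⟨trivial, ht⟩).hasFDerivAt_partial_fst
    ht).fderiv

theorem ContDiff.differentiable_uncurry_apply {g : 𝕜 → E → F → G} {n : WithTop ℕ∞}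
    (hg : ContDiff 𝕜 n fun q : 𝕜 × E × F => g q.1 q.2.1 q.2.2) (hn : n ≠ 0) (t : 𝕜) :
    Differentiable 𝕜 (uncurry (g t)) :=
  (hg.differentiable hn).comp (f := fun q : E × F => (t, q))
    (differentiable_const t |>.prodMk differentiable_id)

theorem ContDiff.continuousOn_fderiv_along {f : 𝕜 → E → F → G} {y : 𝕜 → E} {s : Set 𝕜}
    (hf : ContDiff 𝕜 1 fun q : 𝕜 × E × F => f q.1 q.2.1 q.2.2) (hy : ContinuousOn y s) (θ : F) :
    ContinuousOn (fun t => fderiv 𝕜 (fun θ' => f t (y t) θ') θ) s :=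
  (Continuous.fderiv_one (f := fun q : 𝕜 × E => f q.1 q.2)
    (hf.comp (contDiff_fst.fst.prodMk (contDiff_fst.snd.prodMk contDiff_snd)))
    continuous_const).comp_continuousOn (continuousOn_id.prodMk hy)

end Partials

section MixedPartials

variable {𝕜 : Type*} [NontriviallyNormedField 𝕜] [IsRCLikeNormedField 𝕜]
  {E G : Type*} [NormedAddCommGroup E] [NormedSpace 𝕜 E] [NormedAddCommGroup G] [NormedSpace 𝕜 G]

theorem ContDiffAt.hasDerivAt_fderiv_partial_fst {x v : E → 𝕜 → G} {θ : E} {t : 𝕜}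
    (hx : ContDiffAt 𝕜 2 (uncurry x) (θ, t))
    (hv : ∀ᶠ q in 𝓝 (θ, t), HasDerivAt (x q.1) (v q.1 q.2) q.2) :
    HasDerivAt (fun s => fderiv 𝕜 (fun θ' => x θ' s) θ) (fderiv 𝕜 (fun θ' => v θ' t) θ) t := by
  set X := uncurry x
  have hX : ∀ᶠ q in 𝓝 (θ, t), HasFDerivAt X (fderiv 𝕜 X q) q :=
    (hx.eventually (by simp)).mono fun q hq => (hq.differentiableAt two_ne_zero).hasFDerivAt
  have hX' : HasFDerivAt (fderiv 𝕜 X) (fderiv 𝕜 (fderiv 𝕜 X) (θ, t)) (θ, t) :=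
    ((hx.fderiv_right (m := 1) le_rfl).differentiableAt one_ne_zero).hasFDerivAt
  set D := fderiv 𝕜 (fderiv 𝕜 X) (θ, t)
  have hline : ∀ q : E × 𝕜, HasDerivAt (fun s => (q.1, s)) ((0 : E), (1 : 𝕜)) q.2 :=
    fun q => (hasDerivAt_const _ _).prodMk (hasDerivAt_id _)
  have hvX : uncurry v =ᶠ[𝓝 (θ, t)] fun q => fderiv 𝕜 X q ((0 : E), (1 : 𝕜)) := by
    filter_upwards [hv, hX] with q hvq hXq
    exact hvq.unique (hXq.comp_hasDerivAt (f := fun s => (q.1, s)) q.2 (hline q))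
  have hv' : HasFDerivAt (uncurry v) ((apply 𝕜 G ((0 : E), (1 : 𝕜))).comp D) (θ, t) :=
    ((apply 𝕜 G ((0 : E), (1 : 𝕜))).hasFDerivAt.comp (θ, t) hX').congr_of_eventuallyEq hvX
  have hXθ : (fun s => fderiv 𝕜 (fun θ' => x θ' s) θ) =ᶠ[𝓝 t]
      fun s => (fderiv 𝕜 X (θ, s)).comp (inl 𝕜 E 𝕜) := by
    filter_upwards [(hline (θ, t)).continuousAt.tendsto.eventually hX] with s hs
    exact (hs.comp (g := X) θ (hasFDerivAt_prodMk_left (𝕜 := 𝕜) θ s)).fderiv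
  have hd : HasDerivAt (fun s => (fderiv 𝕜 X (θ, s)).comp (inl 𝕜 E 𝕜))
      ((D ((0 : E), (1 : 𝕜))).comp (inl 𝕜 E 𝕜)) t := by
    simpa using (hX'.comp_hasDerivAt t (hline (θ, t))).clm_comp (hasDerivAt_const t (inl 𝕜 E 𝕜))
  have hvθ : HasFDerivAt (fun θ' => v θ' t) (((apply 𝕜 G ((0 : E), (1 : 𝕜))).comp D).comp
      (inl 𝕜 E 𝕜)) θ := hv'.comp (f := fun θ' => (θ', t)) θ (hasFDerivAt_prodMk_left θ t)
  rw [hvθ.fderiv]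
  -- both sides are `D (w, 0) (0, 1)`, up to the symmetry of the second derivative `D`
  refine (hd.congr_of_eventuallyEq hXθ).congr_deriv ?_
  ext w
  exact second_derivative_symmetric_of_eventually hX hX' _ _

end MixedPartials

theorem hasDerivAt_fderiv_of_ode {E G : Type*} [NormedAddCommGroup E] [NormedSpace ℝ E]
    [NormedAddCommGroup G] [NormedSpace ℝ G] {x : E → ℝ → G} {f : ℝ → G → E → G} {a b t : ℝ}
    {θ : E} (hx : ContDiffOn ℝ 2 (uncurry x) (univ ×ˢ Icc a b))
    (hode : ∀ θ, ∀ t ∈ Icc a b, HasDerivWithinAt (x θ) (f t (x θ t) θ) (Icc a b) t)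
    (hf : DifferentiableAt ℝ (uncurry (f t)) (x θ t, θ)) (ht : t ∈ Ioo a b) :
    HasDerivAt (fun s => fderiv ℝ (fun θ' => x θ' s) θ)
      ((fderiv ℝ (fun y => f t y θ) (x θ t)).comp (fderiv ℝ (fun θ' => x θ' t) θ)
        + fderiv ℝ (fun θ' => f t (x θ t) θ') θ) t := by
  have hnhds : univ ×ˢ Ioo a b ∈ 𝓝 (θ, t) := (isOpen_univ.prod isOpen_Ioo).mem_nhds ⟨trivial, ht⟩
  have hxt : ContDiffAt ℝ 2 (uncurry x) (θ, t) :=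
    hx.contDiffAt (mem_of_superset hnhds (prod_mono le_rfl Ioo_subset_Icc_self))
  have hode' : ∀ᶠ q in 𝓝 (θ, t), HasDerivAt (x q.1) (f q.2 (x q.1 q.2) q.1) q.2 := by
    filter_upwards [hnhds] with q hq
    exact (hode q.1 q.2 (Ioo_subset_Icc_self hq.2)).hasDerivAt (Icc_mem_nhds hq.2.1 hq.2.2)
  have h := hxt.hasDerivAt_fderiv_partial_fst (v := fun θ' s => f s (x θ' s) θ') hode'
  rwa [((hx.differentiableOn two_ne_zero).differentiableAt_partial_fst
    (Ioo_subset_Icc_self ht)).hasFDerivAt.uncurry_comp_partials hf |>.fderiv] at h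

theorem ContinuousOn.update_Icc_of_tendsto {α β : Type*} [LinearOrder α] [TopologicalSpace α]
    [OrderTopology α] [TopologicalSpace β] {f : α → β} {a b : α} {y : β}
    (hf : ContinuousOn f (Ico a b)) (hb : Tendsto f (𝓝[<] b) (𝓝 y)) :
    ContinuousOn (update f b y) (Icc a b) := by
  rw [continuousOn_update_iff, Icc_sdiff_right]
  exact ⟨hf, fun _ => hb.mono_left (nhdsWithin_mono _ Ico_subset_Iio_self)⟩

theorem mem_Icc_of_forall_lt_add_one {β : Type*} [Preorder β] {τ : ℕ → β} {K : ℕ}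
    (hτ : ∀ k ≤ K, τ k < τ (k + 1)) {k : ℕ} (hk : k ≤ K + 1) : τ k ∈ Icc (τ 0) (τ (K + 1)) := by
  have hmono : MonotoneOn τ (Iic (K + 1)) :=
    (strictMonoOn_Iic_of_lt_succ fun m hm => by simpa using hτ m (by omega)).monotoneOn
  exact ⟨hmono (by simp) hk (Nat.zero_le k), hmono hk (by simp) hk⟩

theorem Finset.sum_range_add_one_sub {M : Type*} [AddCommGroup M] (a b : ℕ → M) (K : ℕ) :
    ∑ k ∈ range (K + 1), (a (k + 1) - b k) = a (K + 1) - b 0 + ∑ k ∈ Icc 1 K, (a k - b k) := by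
  induction K with
  | zero => simp
  | succ K ih =>
    rw [sum_range_succ, ih, sum_Icc_succ_top (by omega)]
    abel

section Adjoint

variable {E P : Type*} [NormedAddCommGroup E] [InnerProductSpace ℝ E]
  [NormedAddCommGroup P] [NormedSpace ℝ P]
  {l l' : ℝ → E} {S : ℝ → P →L[ℝ] E} {A : ℝ → E →L[ℝ] E} {B : ℝ → P →L[ℝ] E}

theorem integral_inner_comp_eq_of_adjoint {a b : ℝ} (hab : a < b) {L : E}
    (hl : ∀ t ∈ Ico a b, HasDerivWithinAt l (l' t) (Ico a b) t)
    (hL : Tendsto l (𝓝[<] b) (𝓝 L))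
    (hadj : ∀ t ∈ Ioo a b, innerSL ℝ (l' t) = -((innerSL ℝ (l t)).comp (A t)))
    (hS : ContinuousOn S (Icc a b))
    (hS' : ∀ t ∈ Ioo a b, HasDerivAt S ((A t).comp (S t) + B t) t)
    (hB : ContinuousOn B (Icc a b)) :
    IntervalIntegrable (fun t => (innerSL ℝ (l t)).comp (B t)) volume a b ∧
      ∫ t in a..b, (innerSL ℝ (l t)).comp (B t)
        = (innerSL ℝ L).comp (S b) - (innerSL ℝ (l a)).comp (S a) := by
  set lb := update l b L
  have hlb : ContinuousOn lb (Icc a b) :=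
    ContinuousOn.update_Icc_of_tendsto (fun t ht => (hl t ht).continuousWithinAt) hL
  have hlb_eq : EqOn lb l (Ioo a b) := fun t ht => update_of_ne ht.2.ne _ _
  have hint : IntervalIntegrable (fun t => (innerSL ℝ (l t)).comp (B t)) volume a b := by
    refine (((innerSL ℝ).continuous.comp_continuousOn hlb).clm_comp hB).intervalIntegrable_of_Icc
      hab.le |>.congr_uIoo fun t ht => ?_
    rw [uIoo_of_le hab.le] at ht
    simp [hlb_eq ht]
  have hderiv : ∀ t ∈ Ioo a b, HasDerivAt (fun s => (innerSL ℝ (lb s)).comp (S s))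
      ((innerSL ℝ (l t)).comp (B t)) t := by
    intro t ht
    have hlt : HasDerivAt lb (l' t) t :=
      ((hl t (Ioo_subset_Ico_self ht)).hasDerivAt (Ico_mem_nhds ht.1 ht.2)).congr_of_eventuallyEq
        (eventually_of_mem (Ioo_mem_nhds ht.1 ht.2) hlb_eq)
    refine (((innerSL ℝ).hasFDerivAt.comp_hasDerivAt t hlt).clm_comp (hS' t ht)).congr_deriv ?_
    rw [hadj t ht, Function.comp_apply, hlb_eq ht, comp_add, neg_comp,
      ContinuousLinearMap.comp_assoc]
    abel
  refine ⟨hint, ?_⟩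
  rw [intervalIntegral.integral_eq_sub_of_hasDerivAt_of_le hab.le
    (((innerSL ℝ).continuous.comp_continuousOn hlb).clm_comp hS) hderiv hint]
  simp [lb, update_of_ne hab.ne]

theorem integral_inner_comp_eq_of_hybrid_adjoint {K : ℕ} {τ : ℕ → ℝ}
    (hτ : ∀ k ≤ K, τ k < τ (k + 1)) {L : ℕ → E} {lT : E}
    (hl : ∀ k ≤ K, ∀ t ∈ Ico (τ k) (τ (k + 1)),
      HasDerivWithinAt l (l' t) (Ico (τ k) (τ (k + 1))) t)
    (hadj : ∀ k ≤ K, ∀ t ∈ Ico (τ k) (τ (k + 1)),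
      innerSL ℝ (l' t) = -((innerSL ℝ (l t)).comp (A t)))
    (hL : ∀ k, 1 ≤ k → k ≤ K → Tendsto l (𝓝[<] (τ k)) (𝓝 (L k)))
    (hlT : Tendsto l (𝓝[<] (τ (K + 1))) (𝓝 lT))
    (hS : ContinuousOn S (Icc (τ 0) (τ (K + 1))))
    (hS' : ∀ t ∈ Ioo (τ 0) (τ (K + 1)), HasDerivAt S ((A t).comp (S t) + B t) t)
    (hB : ContinuousOn B (Icc (τ 0) (τ (K + 1)))) :
    ∫ t in τ 0..τ (K + 1), (innerSL ℝ (l t)).comp (B t) =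
      (innerSL ℝ lT).comp (S (τ (K + 1))) - (innerSL ℝ (l (τ 0))).comp (S (τ 0))
        + ∑ k ∈ Finset.Icc 1 K, (innerSL ℝ (L k) - innerSL ℝ (l (τ k))).comp (S (τ k)) := by
  -- `update L (K + 1) lT` is the left limit of `l` at `τ (k + 1)` for every `k ≤ K`
  have hpiece : ∀ k ≤ K,
      IntervalIntegrable (fun t => (innerSL ℝ (l t)).comp (B t)) volume (τ k) (τ (k + 1)) ∧
        ∫ t in τ k..τ (k + 1), (innerSL ℝ (l t)).comp (B t)
          = (innerSL ℝ (update L (K + 1) lT (k + 1))).comp (S (τ (k + 1)))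
            - (innerSL ℝ (l (τ k))).comp (S (τ k)) := by
    intro k hk
    have h0 : τ 0 ≤ τ k := (mem_Icc_of_forall_lt_add_one hτ (by omega)).1
    have hK : τ (k + 1) ≤ τ (K + 1) := (mem_Icc_of_forall_lt_add_one hτ (by omega)).2
    refine integral_inner_comp_eq_of_adjoint (hτ k hk) (hl k hk) ?_
      (fun t ht => hadj k hk t (Ioo_subset_Ico_self ht)) (hS.mono (Icc_subset_Icc h0 hK))
      (fun t ht => hS' t (Ioo_subset_Ioo h0 hK ht)) (hB.mono (Icc_subset_Icc h0 hK))
    rcases hk.lt_or_eq with hk | rfl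
    · rw [update_of_ne (by omega)]
      exact hL (k + 1) (by omega) hk
    · rwa [update_self]
  rw [← intervalIntegral.sum_integral_adjacent_intervals fun k hk => (hpiece k (by omega)).1,
    Finset.sum_congr rfl fun k hk => (hpiece k (by simp at hk; omega)).2]
  refine (Finset.sum_range_add_one_sub (fun j => (innerSL ℝ (update L (K + 1) lT j)).comp (S (τ j)))
    (fun j => (innerSL ℝ (l (τ j))).comp (S (τ j))) K).trans ?_
  rw [update_self]
  congr 1
  refine Finset.sum_congr rfl fun k hk => ?_
  rw [update_of_ne (by simp at hk; omega), sub_comp]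

end Adjoint

theorem hybrid_adjoint_gradient_general
    (n p K : ℕ) (T : ℝ) (hT : 0 < T)
    (f : ℝ → EuclideanSpace ℝ (Fin n) → EuclideanSpace ℝ (Fin p) → EuclideanSpace ℝ (Fin n))
    (γ : ℝ → EuclideanSpace ℝ (Fin n) → EuclideanSpace ℝ (Fin p) → ℝ)
    (Γ : EuclideanSpace ℝ (Fin n) → EuclideanSpace ℝ (Fin p) → ℝ)
    (hf : ContDiff ℝ 1
      (fun q : ℝ × EuclideanSpace ℝ (Fin n) × EuclideanSpace ℝ (Fin p) => f q.1 q.2.1 q.2.2))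
    (hγ : ContDiff ℝ 1
      (fun q : ℝ × EuclideanSpace ℝ (Fin n) × EuclideanSpace ℝ (Fin p) => γ q.1 q.2.1 q.2.2))
    (hΓ : ContDiff ℝ 1
      (fun q : EuclideanSpace ℝ (Fin n) × EuclideanSpace ℝ (Fin p) => Γ q.1 q.2))
    (x : EuclideanSpace ℝ (Fin p) → ℝ → EuclideanSpace ℝ (Fin n))
    (hx : ContDiffOn ℝ 2
      (fun q : EuclideanSpace ℝ (Fin p) × ℝ => x q.1 q.2)
      (Set.univ ×ˢ Set.Icc (0 : ℝ) T))
    (hode : ∀ θ, ∀ t ∈ Set.Icc (0 : ℝ) T,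
      HasDerivWithinAt (x θ) (f t (x θ t) θ) (Set.Icc (0 : ℝ) T) t)
    (x₀ : EuclideanSpace ℝ (Fin n)) (hx0 : ∀ θ, x θ 0 = x₀)
    (τ : ℕ → ℝ) (hτ0 : τ 0 = 0) (hτT : τ (K + 1) = T)
    (hτmono : ∀ k ≤ K, τ k < τ (k + 1))
    (θ₀ : EuclideanSpace ℝ (Fin p))
    (l l' : ℝ → EuclideanSpace ℝ (Fin n))
    (lm : ℕ → EuclideanSpace ℝ (Fin n))
    (hlderiv : ∀ k ≤ K, ∀ t ∈ Set.Ico (τ k) (τ (k + 1)),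
      HasDerivWithinAt l (l' t) (Set.Ico (τ k) (τ (k + 1))) t)
    (hadj : ∀ k ≤ K, ∀ t ∈ Set.Ico (τ k) (τ (k + 1)),
      innerSL ℝ (l' t)
        = -((innerSL ℝ (l t)).comp (fderiv ℝ (fun y => f t y θ₀) (x θ₀ t))))
    (hlT : Filter.Tendsto l (nhdsWithin T (Set.Iio T)) (nhds (l T)))
    (hlTval : innerSL ℝ (l T) = fderiv ℝ (fun y => Γ y θ₀) (x θ₀ T))
    (hleftlim : ∀ k, 1 ≤ k → k ≤ K →
      Filter.Tendsto l (nhdsWithin (τ k) (Set.Iio (τ k))) (nhds (lm k)))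
    (hjump : ∀ k, 1 ≤ k → k ≤ K →
      innerSL ℝ (lm k)
        = innerSL ℝ (l (τ k)) + fderiv ℝ (fun y => γ (τ k) y θ₀) (x θ₀ (τ k))) :
    HasFDerivAt
      (fun θ => (∑ k ∈ Finset.Icc 1 K, γ (τ k) (x θ (τ k)) θ) + Γ (x θ T) θ)
      (fderiv ℝ (fun θ => Γ (x θ₀ T) θ) θ₀
        + (∑ k ∈ Finset.Icc 1 K, fderiv ℝ (fun θ => γ (τ k) (x θ₀ (τ k)) θ) θ₀)
        + ∫ t in (0 : ℝ)..T,
            (innerSL ℝ (l t)).comp (fderiv ℝ (fun θ => f t (x θ₀ t) θ) θ₀))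
      θ₀ := by
  have hS : ∀ t ∈ Icc 0 T, HasFDerivAt (fun θ => x θ t) (fderiv ℝ (fun θ => x θ t) θ₀) θ₀ :=
    fun t ht => ((hx.differentiableOn two_ne_zero).differentiableAt_partial_fst ht).hasFDerivAt
  have hadjoint := integral_inner_comp_eq_of_hybrid_adjoint hτmono hlderiv hadj hleftlim
    (hτT ▸ hlT)
    (by rw [hτ0, hτT]; exact (hx.of_le one_le_two).continuousOn_fderiv_partial_fst
          (uniqueDiffOn_Icc hT) le_rfl θ₀)
    (by rw [hτ0, hτT]; exact fun t ht => hasDerivAt_fderiv_of_ode hx hode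
          (hf.differentiable_uncurry_apply one_ne_zero t _) ht)
    (by rw [hτ0, hτT]; exact hf.continuousOn_fderiv_along
          (fun t ht => (hode θ₀ t ht).continuousWithinAt) θ₀)
  have hS0 : fderiv ℝ (fun θ => x θ 0) θ₀ = 0 := by simp [hx0]
  rw [hτ0, hτT, hS0, hlTval] at hadjoint
  have hJ := (HasFDerivAt.fun_sum (u := Finset.Icc 1 K) fun k hk => (hS (τ k) (hτ0 ▸ hτT ▸
      mem_Icc_of_forall_lt_add_one hτmono (by simp at hk; omega))).uncurry_comp_partials
      (hγ.differentiable_uncurry_apply one_ne_zero (τ k) _)).fun_add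
    ((hS T ⟨hT.le, le_rfl⟩).uncurry_comp_partials (hΓ.differentiable one_ne_zero _))
  have hjumps : ∀ k ∈ Finset.Icc 1 K,
      (innerSL ℝ (lm k) - innerSL ℝ (l (τ k))).comp (fderiv ℝ (fun θ => x θ (τ k)) θ₀)
        = (fderiv ℝ (fun y => γ (τ k) y θ₀) (x θ₀ (τ k))).comp
            (fderiv ℝ (fun θ => x θ (τ k)) θ₀) := fun k hk => by
    obtain ⟨hk1, hkK⟩ := Finset.mem_Icc.mp hk
    rw [hjump k hk1 hkK, add_sub_cancel_left]
  refine hJ.congr_fderiv ?_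
  rw [hadjoint, comp_zero, sub_zero, Finset.sum_congr rfl hjumps, Finset.sum_add_distrib]
  abel

/-- **Hybrid adjoint dynamics for point-wise costs (deterministic specialization).**
Fix instants `0 = τ 0 < τ 1 < ... < τ K < τ (K+1) = T` and the criterion
`J(θ) = Σ_{k=1}^K γ(τ k, x(θ, τ k), θ) + Γ(x(θ,T), θ)` for `ẋ = f(t, x, θ)` with
`x(θ,0) = x₀` independent of `θ`.  The adjoint `λ` follows the homogeneous backward
dynamics `λ'(t)ᵀ = −λ(t)ᵀ D_x f` on each inter-jump interval, has terminal condition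
`λ(T)ᵀ = D_x Γ` (with `λ` left-continuous at `T`), and at each instant `τ k` its left
limit `lm k` satisfies the jump condition `(lm k)ᵀ = λ(τ k)ᵀ + D_x γ(τ k, ·)`
(with `λ(τ k)` the post-jump value, `λ` being right-continuous at `τ k`).  Then
`dJ/dθ|_{θ₀} = D_θ Γ + Σ_{k=1}^K D_θ γ(τ k, ·) + ∫₀ᵀ λ(t)ᵀ D_θ f dt`,
where `λ(t)ᵀ M = (innerSL ℝ (l t)).comp M`. -/
theorem hybrid_adjoint_gradient
    (n p K : ℕ) (T : ℝ) (hT : 0 < T)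
    (f : ℝ → EuclideanSpace ℝ (Fin n) → EuclideanSpace ℝ (Fin p) → EuclideanSpace ℝ (Fin n))
    (γ : ℝ → EuclideanSpace ℝ (Fin n) → EuclideanSpace ℝ (Fin p) → ℝ)
    (Γ : EuclideanSpace ℝ (Fin n) → EuclideanSpace ℝ (Fin p) → ℝ)
    (hf : ContDiff ℝ 1
      (fun q : ℝ × EuclideanSpace ℝ (Fin n) × EuclideanSpace ℝ (Fin p) => f q.1 q.2.1 q.2.2))
    (hγ : ContDiff ℝ 1
      (fun q : ℝ × EuclideanSpace ℝ (Fin n) × EuclideanSpace ℝ (Fin p) => γ q.1 q.2.1 q.2.2))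
    (hΓ : ContDiff ℝ 1
      (fun q : EuclideanSpace ℝ (Fin n) × EuclideanSpace ℝ (Fin p) => Γ q.1 q.2))
    (x : EuclideanSpace ℝ (Fin p) → ℝ → EuclideanSpace ℝ (Fin n))
    (hx : ContDiffOn ℝ 2
      (fun q : EuclideanSpace ℝ (Fin p) × ℝ => x q.1 q.2)
      (Set.univ ×ˢ Set.Icc (0 : ℝ) T))
    (hode : ∀ θ, ∀ t ∈ Set.Icc (0 : ℝ) T,
      HasDerivWithinAt (x θ) (f t (x θ t) θ) (Set.Icc (0 : ℝ) T) t)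
    (x₀ : EuclideanSpace ℝ (Fin n)) (hx0 : ∀ θ, x θ 0 = x₀)
    (τ : ℕ → ℝ) (hτ0 : τ 0 = 0) (hτT : τ (K + 1) = T)
    (hτmono : ∀ k ≤ K, τ k < τ (k + 1))
    (θ₀ : EuclideanSpace ℝ (Fin p))
    (l l' : ℝ → EuclideanSpace ℝ (Fin n))
    (lm : ℕ → EuclideanSpace ℝ (Fin n))
    (hlcont : ∀ k ≤ K, ContinuousOn l (Set.Ico (τ k) (τ (k + 1))))
    (hlderiv : ∀ k ≤ K, ∀ t ∈ Set.Ico (τ k) (τ (k + 1)),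
      HasDerivWithinAt l (l' t) (Set.Ico (τ k) (τ (k + 1))) t)
    (hl'cont : ∀ k ≤ K, ContinuousOn l' (Set.Ico (τ k) (τ (k + 1))))
    (hadj : ∀ k ≤ K, ∀ t ∈ Set.Ico (τ k) (τ (k + 1)),
      innerSL ℝ (l' t)
        = -((innerSL ℝ (l t)).comp (fderiv ℝ (fun y => f t y θ₀) (x θ₀ t))))
    (hlT : Filter.Tendsto l (nhdsWithin T (Set.Iio T)) (nhds (l T)))
    (hlTval : innerSL ℝ (l T) = fderiv ℝ (fun y => Γ y θ₀) (x θ₀ T))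
    (hleftlim : ∀ k, 1 ≤ k → k ≤ K →
      Filter.Tendsto l (nhdsWithin (τ k) (Set.Iio (τ k))) (nhds (lm k)))
    (hjump : ∀ k, 1 ≤ k → k ≤ K →
      innerSL ℝ (lm k)
        = innerSL ℝ (l (τ k)) + fderiv ℝ (fun y => γ (τ k) y θ₀) (x θ₀ (τ k))) :
    HasFDerivAt
      (fun θ => (∑ k ∈ Finset.Icc 1 K, γ (τ k) (x θ (τ k)) θ) + Γ (x θ T) θ)
      (fderiv ℝ (fun θ => Γ (x θ₀ T) θ) θ₀
        + (∑ k ∈ Finset.Icc 1 K, fderiv ℝ (fun θ => γ (τ k) (x θ₀ (τ k)) θ) θ₀)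
        + ∫ t in (0 : ℝ)..T,
            (innerSL ℝ (l t)).comp (fderiv ℝ (fun θ => f t (x θ₀ t) θ) θ₀))
      θ₀ :=
  hybrid_adjoint_gradient_general n p K T hT f γ Γ hf hγ hΓ x hx hode x₀ hx0 τ hτ0 hτT hτmono θ₀ l
    l' lm hlderiv hadj hlT hlTval hleftlim hjump
end
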